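/- Let S be an α-stable subordinator with index α ∈ (0,1) and let θ ∈ (0, 1/α). Then almost surely, for every T > 0, the integration-by-parts identity ∫_0^T t^{-θ} dS_t = T^{-θ} S_T + θ ∫_0^T t^{-θ-1} S_t dt holds, with both sides finite. -/

import Mathlib

open MeasureTheory ProbabilityTheory Filter Set
open scoped ENNReal NNReal Topology

/-- An `α`-stable subordinator on a probability space `Ω`: a real-valued process with
`S 0 = 0`, stationary independent increments, almost surely nondecreasing right-continuous
sample paths, and Laplace transform `E[exp (-λ S t)] = exp (-t λ^α)`.
The process is extended by `0` to nonpositive times, so that the a.s. path regularity on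
`[0, ∞)` can be expressed as regularity of the extended path on all of `ℝ`. -/
structure StableSubordinator (Ω : Type*) [MeasureSpace Ω] [IsProbabilityMeasure (ℙ : Measure Ω)]
    (α : ℝ) where
  S : ℝ → Ω → ℝ
  measurable : ∀ t : ℝ, Measurable (S t)
  zero_of_nonpos : ∀ t : ℝ, t ≤ 0 → ∀ ω, S t ω = 0
  path : ∀ᵐ ω : Ω, Monotone (fun t => S t ω) ∧
    ∀ x : ℝ, ContinuousWithinAt (fun t => S t ω) (Set.Ici x) x
  indep_increments : ∀ (n : ℕ) (t : Fin (n + 1) → ℝ), Monotone t → (∀ i, 0 ≤ t i) →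
    iIndepFun (m := fun _ : Fin n => Real.measurableSpace)
      (fun i ω => S (t i.succ) ω - S (t i.castSucc) ω) ℙ
  stationary_increments : ∀ s t : ℝ, 0 ≤ s → s ≤ t →
    Measure.map (fun ω => S t ω - S s ω) ℙ = Measure.map (S (t - s)) ℙ
  laplace : ∀ lam : ℝ, 0 < lam → ∀ t : ℝ, 0 ≤ t →
    ∫ ω, Real.exp (-lam * S t ω) ∂ℙ = Real.exp (-t * lam ^ α)

open Classical in
/-- The Lebesgue–Stieltjes measure induced by a nondecreasing right-continuous path
(junk value `0` if the path is not such). -/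
noncomputable def pathMeasure (f : ℝ → ℝ) : Measure ℝ :=
  if h : Monotone f ∧ ∀ x : ℝ, ContinuousWithinAt f (Set.Ici x) x then
    StieltjesFunction.measure ⟨f, h.1, h.2⟩ else 0

/-!
Pathwise, the identity is Tonelli's theorem applied to
`t ^ (-θ) = T ^ (-θ) + θ ∫_t^T s ^ (-θ-1) ds`, which turns `∫ t ^ (-θ) dS_t` into
`T ^ (-θ) S_T + θ ∫ s ^ (-θ-1) S_{s-} ds`; the left limit `S_{s-}` differs from `S_s` only at the
countably many jumps. Finiteness needs `S_s = O(s ^ γ)` as `s → 0` for some `γ > θ`. Taking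
`θ < γ < 1/α`, the Laplace transform gives `P(S_t > a) ≤ C t a ^ (-α)`, so
`P(S_{2^{-n}} > 2^{-nγ}) ≤ C 2^{-n(1-γα)}` is summable; by Borel–Cantelli and monotonicity,
`S_s ≤ 2^γ s^γ` near `0` almost surely.
-/

theorem ofReal_rpow_neg_eq_add_lintegral {θ t T : ℝ} (hθ : 0 < θ) (ht : 0 < t) (htT : t ≤ T) :
    ENNReal.ofReal (t ^ (-θ)) = ENNReal.ofReal (T ^ (-θ)) +
      ENNReal.ofReal θ * ∫⁻ s in Ioo t T, ENNReal.ofReal (s ^ (-θ - 1)) := by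
  have h0 : (0 : ℝ) ∉ uIcc t T := by
    rw [uIcc_of_le htT]
    exact fun h => ht.not_ge h.1
  have hint : IntegrableOn (fun s : ℝ => s ^ (-θ - 1)) (Ioc t T) :=
    (intervalIntegrable_iff_integrableOn_Ioc_of_le htT).mp
      (intervalIntegral.intervalIntegrable_rpow (Or.inr h0))
  have hFTC : ∫ s in Ioc t T, s ^ (-θ - 1) = (t ^ (-θ) - T ^ (-θ)) / θ := by
    rw [← intervalIntegral.integral_of_le htT, integral_rpow (Or.inr ⟨by linarith, h0⟩),
      sub_add_cancel, div_neg, ← neg_div, neg_sub]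
  have hlint : ∫⁻ s in Ioo t T, ENNReal.ofReal (s ^ (-θ - 1)) =
      ENNReal.ofReal ((t ^ (-θ) - T ^ (-θ)) / θ) := by
    rw [setLIntegral_congr Ioo_ae_eq_Ioc, ← hFTC,
      ofReal_integral_eq_lintegral_ofReal hint]
    filter_upwards [self_mem_ae_restrict measurableSet_Ioc] with s hs
    exact Real.rpow_nonneg (ht.trans hs.1).le _
  have hle : T ^ (-θ) ≤ t ^ (-θ) := Real.rpow_le_rpow_of_nonpos ht htT (by linarith)
  rw [hlint, ← ENNReal.ofReal_mul hθ.le, mul_div_cancel₀ _ hθ.ne',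
    ENNReal.ofReal_sub _ (Real.rpow_nonneg (ht.trans_le htT).le _),
    add_tsub_cancel_of_le (ENNReal.ofReal_le_ofReal hle)]

theorem setLIntegral_Ioc_setLIntegral_Ioo_eq (μ : Measure ℝ) [SFinite μ] {g : ℝ → ℝ≥0∞}
    (hg : Measurable g) (a T : ℝ) :
    ∫⁻ t in Ioc a T, (∫⁻ s in Ioo t T, g s) ∂μ = ∫⁻ s in Ioo a T, g s * μ (Ioo a s) := by
  set G : ℝ × ℝ → ℝ≥0∞ := {p | p.1 < p.2}.indicator (g ∘ Prod.snd)
  have hG : Measurable G :=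
    (hg.comp measurable_snd).indicator (measurableSet_lt measurable_fst measurable_snd)
  have hinner : ∀ t ∈ Ioc a T, ∫⁻ s in Ioo t T, g s = ∫⁻ s in Ioo a T, G (t, s) := by
    intro t ht
    have hGt : (fun s => G (t, s)) = (Ioi t).indicator g := by
      ext s; simp [G, indicator]
    rw [hGt, lintegral_indicator measurableSet_Ioi, Measure.restrict_restrict measurableSet_Ioi,
      Ioi_inter_Ioo, max_eq_left ht.1.le]
  have houter : ∀ s ∈ Ioo a T, ∫⁻ t in Ioc a T, G (t, s) ∂μ = g s * μ (Ioo a s) := by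
    intro s hs
    have hGs : (fun t => G (t, s)) = (Iio s).indicator fun _ => g s := by
      ext t; simp [G, indicator]
    rw [hGs, lintegral_indicator measurableSet_Iio, Measure.restrict_restrict measurableSet_Iio,
      setLIntegral_const]
    congr 2
    ext t
    simp only [mem_inter_iff, mem_Iio, mem_Ioc, mem_Ioo]
    constructor
    · rintro ⟨hts, hat, -⟩; exact ⟨hat, hts⟩
    · rintro ⟨hat, hts⟩; exact ⟨hts, hat, hts.le.trans hs.2.le⟩
  rw [setLIntegral_congr_fun measurableSet_Ioc hinner,
    lintegral_lintegral_swap (f := fun t s => G (t, s)) hG.aemeasurable,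
    setLIntegral_congr_fun measurableSet_Ioo houter]

theorem Monotone.leftLim_ae_eq {f : ℝ → ℝ} (hf : Monotone f) (μ : Measure ℝ)
    [NullSingletonClass μ] :
    Function.leftLim f =ᵐ[μ] f := by
  refine (hf.countable_not_continuousAt.ae_notMem μ).mono fun x hx => ?_
  exact (not_not.mp hx).continuousWithinAt.leftLim_eq

theorem StieltjesFunction.setLIntegral_rpow_neg_eq (f : StieltjesFunction ℝ) {θ T : ℝ}
    (hθ : 0 < θ) (hT : 0 ≤ T) :
    ∫⁻ t in Ioc 0 T, ENNReal.ofReal (t ^ (-θ)) ∂f.measure =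
      ENNReal.ofReal (T ^ (-θ) * (f T - f 0)) +
        ENNReal.ofReal θ * ∫⁻ s in Ioo 0 T, ENNReal.ofReal (s ^ (-θ - 1) * (f s - f 0)) := by
  have hg : Measurable fun s : ℝ => ENNReal.ofReal (s ^ (-θ - 1)) := by fun_prop
  have hF : Measurable fun t => ∫⁻ s in Ioo t T, ENNReal.ofReal (s ^ (-θ - 1)) :=
    Antitone.measurable fun a b hab =>
      lintegral_mono_set (Ioo_subset_Ioo_left hab)
  have hleftLim : ∀ᵐ s ∂volume.restrict (Ioo 0 T),
      ENNReal.ofReal (s ^ (-θ - 1)) * f.measure (Ioo 0 s) =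
        ENNReal.ofReal (s ^ (-θ - 1) * (f s - f 0)) := by
    filter_upwards [ae_restrict_of_ae (f.mono.leftLim_ae_eq volume),
      self_mem_ae_restrict measurableSet_Ioo] with s hs hs0
    rw [f.measure_Ioo, hs, ← ENNReal.ofReal_mul (Real.rpow_nonneg hs0.1.le _)]
  rw [setLIntegral_congr_fun measurableSet_Ioc
      fun t ht => ofReal_rpow_neg_eq_add_lintegral hθ ht.1 ht.2,
    lintegral_add_left measurable_const, setLIntegral_const, lintegral_const_mul _ hF,
    setLIntegral_Ioc_setLIntegral_Ioo_eq _ hg, lintegral_congr_ae hleftLim, f.measure_Ioc,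
    ← ENNReal.ofReal_mul (Real.rpow_nonneg hT _)]

theorem setLIntegral_Ioc_rpow_mul_ne_top {θ γ δ c : ℝ} {f : ℝ → ℝ} (hθγ : θ < γ)
    (hf : ∀ s ∈ Ioc 0 δ, f s ≤ c * s ^ γ) :
    ∫⁻ s in Ioc 0 δ, ENNReal.ofReal (s ^ (-θ - 1) * f s) ≠ ∞ := by
  have hbound : ∀ s ∈ Ioc 0 δ, ENNReal.ofReal (s ^ (-θ - 1) * f s) ≤
      ENNReal.ofReal (c * s ^ (γ - θ - 1)) := by
    intro s hs
    refine ENNReal.ofReal_le_ofReal ?_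
    calc s ^ (-θ - 1) * f s ≤ s ^ (-θ - 1) * (c * s ^ γ) :=
          mul_le_mul_of_nonneg_left (hf s hs) (Real.rpow_nonneg hs.1.le _)
      _ = c * s ^ (γ - θ - 1) := by
          rw [show γ - θ - 1 = -θ - 1 + γ by ring, Real.rpow_add hs.1]
          ring
  have hint : IntegrableOn (fun s : ℝ => c * s ^ (γ - θ - 1)) (Ioc 0 δ) := by
    rcases le_or_gt δ 0 with hδ | hδ
    · simp [Ioc_eq_empty_of_le hδ]
    exact ((intervalIntegrable_iff_integrableOn_Ioc_of_le hδ.le).mp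
      (intervalIntegral.intervalIntegrable_rpow' (by linarith))).const_mul c
  exact ((setLIntegral_mono' measurableSet_Ioc hbound).trans_lt hint.lintegral_lt_top).ne

theorem Monotone.setLIntegral_Ioo_rpow_mul_ne_top {θ γ δ c T : ℝ} {f : ℝ → ℝ}
    (hf : Monotone f) (hθ : -1 ≤ θ) (hθγ : θ < γ) (hδ : 0 < δ)
    (hfδ : ∀ s ∈ Ioc 0 δ, f s ≤ c * s ^ γ) :
    ∫⁻ s in Ioo 0 T, ENNReal.ofReal (s ^ (-θ - 1) * f s) ≠ ∞ := by
  have hsplit : Ioo 0 T ⊆ Ioc 0 δ ∪ Ico δ T := fun s hs =>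
    (le_or_gt s δ).imp (fun h => ⟨hs.1, h⟩) fun h => ⟨h.le, hs.2⟩
  have hfar : ∀ s ∈ Ico δ T, ENNReal.ofReal (s ^ (-θ - 1) * f s) ≤
      ENNReal.ofReal (δ ^ (-θ - 1)) * ENNReal.ofReal (f T) := by
    intro s hs
    rw [ENNReal.ofReal_mul (Real.rpow_nonneg (hδ.trans_le hs.1).le _)]
    exact mul_le_mul'
      (ENNReal.ofReal_le_ofReal (Real.rpow_le_rpow_of_nonpos hδ hs.1 (by linarith)))
      (ENNReal.ofReal_le_ofReal (hf hs.2.le))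
  have hfar_ne_top : ∫⁻ s in Ico δ T, ENNReal.ofReal (s ^ (-θ - 1) * f s) ≠ ∞ := by
    refine ne_top_of_le_ne_top ?_ (setLIntegral_mono' measurableSet_Ico hfar)
    simp [Real.volume_Ico, ENNReal.mul_eq_top]
  refine ne_top_of_le_ne_top ?_ ((lintegral_mono_set hsplit).trans (lintegral_union_le _ _ _))
  exact ENNReal.add_ne_top.mpr ⟨setLIntegral_Ioc_rpow_mul_ne_top hθγ hfδ, hfar_ne_top⟩

theorem Monotone.le_rpow_of_le_rpow_geometric {f : ℝ → ℝ} (hf : Monotone f) {r γ : ℝ}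
    (hr0 : 0 < r) (hr1 : r < 1) (hγ : 0 ≤ γ) {N : ℕ} (hN : ∀ n ≥ N, f (r ^ n) ≤ (r ^ n) ^ γ) :
    ∀ s ∈ Ioc 0 (r ^ N), f s ≤ r⁻¹ ^ γ * s ^ γ := by
  rintro s ⟨hs0, hsN⟩
  obtain ⟨n, hn_lt, hn_le⟩ :=
    exists_nat_pow_near_of_lt_one hs0 (hsN.trans (pow_le_one₀ hr0.le hr1.le)) hr0 hr1
  have hNn : N ≤ n := Nat.lt_succ_iff.mp <|
    (pow_lt_pow_iff_right_of_lt_one₀ hr0 hr1).mp (hn_lt.trans_le hsN)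
  have hrn : r ^ n ≤ r⁻¹ * s := by
    rw [le_inv_mul_iff₀ hr0, ← pow_succ']
    exact hn_lt.le
  calc f s ≤ (r ^ n) ^ γ := (hf hn_le).trans (hN n hNn)
    _ ≤ (r⁻¹ * s) ^ γ := Real.rpow_le_rpow (by positivity) hrn hγ
    _ = r⁻¹ ^ γ * s ^ γ := Real.mul_rpow (inv_nonneg.mpr hr0.le) hs0.le

namespace StableSubordinator

variable {Ω : Type*} [MeasureSpace Ω] [IsProbabilityMeasure (ℙ : Measure Ω)] {α : ℝ}
  (X : StableSubordinator Ω α)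

theorem ae_nonneg : ∀ᵐ ω, ∀ t, 0 ≤ X.S t ω := by
  filter_upwards [X.path] with ω hω t
  rcases le_total t 0 with ht | ht
  · exact (X.zero_of_nonpos t ht ω).ge
  · exact (X.zero_of_nonpos 0 le_rfl ω).symm.le.trans (hω.1 ht)

theorem measure_lt_le {t a : ℝ} (ht : 0 ≤ t) (ha : 0 < a) :
    ℙ {ω | a < X.S t ω} ≤ ENNReal.ofReal ((1 - Real.exp (-1))⁻¹ * (t * a ^ (-α))) := by
  set g : Ω → ℝ := fun ω => 1 - Real.exp (-a⁻¹ * X.S t ω)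
  have hexp_int : Integrable (fun ω => Real.exp (-a⁻¹ * X.S t ω)) :=
    Integrable.of_integral_ne_zero <| by
      rw [X.laplace _ (inv_pos.mpr ha) t ht]; exact (Real.exp_pos _).ne'
  have hg_nonneg : 0 ≤ᵐ[ℙ] g := by
    filter_upwards [X.ae_nonneg] with ω hω
    have : 0 ≤ a⁻¹ * X.S t ω := mul_nonneg (inv_nonneg.mpr ha.le) (hω t)
    simp only [Pi.zero_apply, g, sub_nonneg, Real.exp_le_one_iff]
    linarith
  have hg_integral : ∫ ω, g ω ≤ t * a ^ (-α) := by
    rw [integral_sub (integrable_const 1) hexp_int, X.laplace _ (inv_pos.mpr ha) t ht,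
      Real.inv_rpow ha.le, ← Real.rpow_neg ha.le]
    simp only [integral_const, probReal_univ, one_smul]
    linarith [Real.add_one_le_exp (-t * a ^ (-α))]
  have hsub : {ω | a < X.S t ω} ⊆ {ω | 1 - Real.exp (-1) ≤ g ω} := by
    intro ω hω
    have : 1 < a⁻¹ * X.S t ω := (one_lt_inv_mul₀ ha).mpr hω
    simp only [mem_ofPred_eq, g, sub_le_sub_iff_left, Real.exp_le_exp]
    linarith
  have hc : 0 < 1 - Real.exp (-1) := sub_pos.mpr (Real.exp_lt_one_iff.mpr (by norm_num))
  have hmarkov := mul_meas_ge_le_integral_of_nonneg hg_nonneg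
    ((integrable_const 1).sub hexp_int) (1 - Real.exp (-1))
  calc ℙ {ω | a < X.S t ω} ≤ ℙ {ω | 1 - Real.exp (-1) ≤ g ω} := measure_mono hsub
    _ = ENNReal.ofReal ((ℙ : Measure Ω).real {ω | 1 - Real.exp (-1) ≤ g ω}) :=
      (ofReal_measureReal).symm
    _ ≤ _ := by
      rw [inv_mul_eq_div]
      exact ENNReal.ofReal_le_ofReal
        (((le_div_iff₀' hc).mpr hmarkov).trans (div_le_div_of_nonneg_right hg_integral hc.le))

theorem ae_eventually_le_rpow_geometric {r γ : ℝ} (hr0 : 0 < r) (hr1 : r < 1)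
    (hγα : γ * α < 1) :
    ∀ᵐ ω, ∀ᶠ n : ℕ in atTop, X.S (r ^ n) ω ≤ (r ^ n) ^ γ := by
  set C := (1 - Real.exp (-1))⁻¹
  have hC : 0 ≤ C := inv_nonneg.mpr (sub_nonneg.mpr (Real.exp_le_one_iff.mpr (by norm_num)))
  set q := r ^ (1 - γ * α)
  have hq0 : 0 ≤ q := Real.rpow_nonneg hr0.le _
  have hq1 : q < 1 := Real.rpow_lt_one hr0.le hr1 (by linarith)
  have hmeas : ∀ n : ℕ, ℙ {ω | (r ^ n) ^ γ < X.S (r ^ n) ω} ≤ ENNReal.ofReal (C * q ^ n) := by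
    intro n
    have hrn : 0 < r ^ n := pow_pos hr0 n
    have hpow : r ^ n * ((r ^ n) ^ γ) ^ (-α) = q ^ n := by
      rw [← Real.rpow_mul hrn.le, ← Real.rpow_one_add' hrn.le (by linarith),
        Real.rpow_pow_comm hr0.le]
      ring_nf
    simpa only [hpow] using X.measure_lt_le hrn.le (Real.rpow_pos_of_pos hrn γ)
  have hsum : ∑' n, ℙ {ω | (r ^ n) ^ γ < X.S (r ^ n) ω} ≠ ∞ := by
    refine ne_top_of_le_ne_top ?_ (ENNReal.tsum_le_tsum hmeas)
    rw [← ENNReal.ofReal_tsum_of_nonneg (fun n => mul_nonneg hC (pow_nonneg hq0 n))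
      ((summable_geometric_of_lt_one hq0 hq1).mul_left C)]
    exact ENNReal.ofReal_ne_top
  filter_upwards [ae_eventually_notMem hsum] with ω hω
  exact hω.mono fun n hn => not_lt.mp hn

end StableSubordinator

/-- If `θ ∈ (0, 1/α)`, then almost surely, for every `T > 0`,
`∫_0^T t^(-θ) dS_t = T^(-θ) S_T + θ ∫_0^T t^(-θ-1) S_t dt`, with both sides finite. -/
theorem singular_integral_integration_by_parts {Ω : Type*} [MeasureSpace Ω]
    [IsProbabilityMeasure (ℙ : Measure Ω)] {α : ℝ} (hα : α ∈ Set.Ioo (0 : ℝ) 1)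
    (X : StableSubordinator Ω α) {θ : ℝ} (hθ : θ ∈ Set.Ioo 0 (1 / α)) :
    ∀ᵐ ω : Ω, ∀ T : ℝ, 0 < T →
      (∫⁻ t in Set.Ioc (0 : ℝ) T, ENNReal.ofReal (t ^ (-θ))
            ∂(pathMeasure (fun t => X.S t ω)) =
          ENNReal.ofReal (T ^ (-θ) * X.S T ω) +
            ENNReal.ofReal θ *
              ∫⁻ t in Set.Ioo (0 : ℝ) T, ENNReal.ofReal (t ^ (-θ - 1) * X.S t ω)) ∧
        (∫⁻ t in Set.Ioc (0 : ℝ) T, ENNReal.ofReal (t ^ (-θ))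
            ∂(pathMeasure (fun t => X.S t ω))) ≠ ∞ ∧
        (∫⁻ t in Set.Ioo (0 : ℝ) T, ENNReal.ofReal (t ^ (-θ - 1) * X.S t ω)) ≠ ∞ := by
  obtain ⟨hθ0, hθα⟩ := hθ
  obtain ⟨γ, hθγ, hγα⟩ := exists_between hθα
  rw [lt_div_iff₀ hα.1] at hγα
  filter_upwards [X.path,
    X.ae_eventually_le_rpow_geometric (r := 2⁻¹) (by norm_num) (by norm_num) hγα]
    with ω hpath hdyadic T hT
  obtain ⟨N, hN⟩ := eventually_atTop.mp hdyadic
  have hfin := hpath.1.setLIntegral_Ioo_rpow_mul_ne_top (T := T) (by linarith) hθγ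
    (by positivity) (hpath.1.le_rpow_of_le_rpow_geometric (by norm_num) (by norm_num)
      (by linarith) hN)
  have hibp := (StieltjesFunction.mk _ hpath.1 hpath.2).setLIntegral_rpow_neg_eq hθ0 hT.le
  dsimp only at hibp
  simp only [X.zero_of_nonpos 0 le_rfl, sub_zero] at hibp
  rw [pathMeasure, dif_pos hpath, hibp]
  exact ⟨rfl, ENNReal.add_ne_top.mpr ⟨ENNReal.ofReal_ne_top,
    ENNReal.mul_ne_top ENNReal.ofReal_ne_top hfin⟩, hfin⟩
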